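/- arXiv:2005.13891 — 4 statements merged into one kernel-verified Lean document; each statement's English description precedes it below -/
import Mathlib

section
/- Let H₁ and H₂ be infinite-dimensional separable complex Hilbert spaces and let v and w be weight sequences. Then E_v(H₁,H₂) ⊆ E_w(H₁,H₂) if and only if there exists a constant M ≥ 0 such that v_k ≤ M·w_k for every k ≥ 1. -/
/-!
Sufficiency is immediate from the definition of `E_w`. For necessity, identify `H₁` and `H₂`
with `ℓ²(ℕ)` (a Hilbert basis of a separable space is countable) and take the diagonal operator
with entries `v₁ ≥ v₂ ≥ ⋯`. Its `k`-th approximation number is exactly `v_k`: cutting the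
diagonal off after `k - 1` entries gives an operator of rank `< k` within distance `v_k`, while
every operator of rank `< k` kills a nonzero vector in the span of the first `k` basis vectors,
on which the diagonal operator is bounded below by `v_k`. This operator lies in `E_v`, hence in
`E_w`, so `v_k = s_k ≤ M w_k`.
-/

open Filter Topology

noncomputable section

def IsWeight (w : ℕ → ℝ) : Prop :=
  (∀ k, 1 ≤ k → w (k + 1) ≤ w k) ∧ (∀ k, 1 ≤ k → 0 ≤ w k) ∧
    Filter.Tendsto w Filter.atTop (nhds 0)

def sNum {H₁ H₂ : Type*} [NormedAddCommGroup H₁] [NormedSpace ℂ H₁]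
    [NormedAddCommGroup H₂] [NormedSpace ℂ H₂] (k : ℕ) (A : H₁ →L[ℂ] H₂) : ℝ :=
  sInf {c : ℝ | ∃ F : H₁ →L[ℂ] H₂,
    Module.rank ℂ (LinearMap.range (F : H₁ →ₗ[ℂ] H₂)) < (k : Cardinal) ∧ c = ‖A - F‖}

def MemE {H₁ H₂ : Type*} [NormedAddCommGroup H₁] [NormedSpace ℂ H₁]
    [NormedAddCommGroup H₂] [NormedSpace ℂ H₂] (w : ℕ → ℝ) (A : H₁ →L[ℂ] H₂) : Prop :=
  IsCompactOperator A ∧ ∃ M : ℝ, 0 ≤ M ∧ ∀ k, 1 ≤ k → sNum k A ≤ M * w k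

def gaugeE {H₁ H₂ : Type*} [NormedAddCommGroup H₁] [NormedSpace ℂ H₁]
    [NormedAddCommGroup H₂] [NormedSpace ℂ H₂] (w : ℕ → ℝ) (A : H₁ →L[ℂ] H₂) : ℝ :=
  sInf {M : ℝ | 0 ≤ M ∧ ∀ k, 1 ≤ k → sNum k A ≤ M * w k}

def dbl (w : ℕ → ℝ) (k : ℕ) : ℝ := w ((k + 1) / 2)

def gmean (w : ℕ → ℝ) (k : ℕ) : ℝ := (∏ n ∈ Finset.Icc 1 k, w n) ^ ((1 : ℝ) / (k : ℝ))

def algMult {H : Type*} [NormedAddCommGroup H] [NormedSpace ℂ H] (A : H →L[ℂ] H) (z : ℂ) : ℕ :=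
  Module.finrank ℂ (Module.End.maxGenEigenspace (A : H →ₗ[ℂ] H) z)

def IsEigSeq {H : Type*} [NormedAddCommGroup H] [NormedSpace ℂ H]
    (A : H →L[ℂ] H) (lam : ℕ → ℂ) : Prop :=
  (∀ k, 1 ≤ k → ‖lam (k + 1)‖ ≤ ‖lam k‖) ∧
  ∀ z : ℂ, z ≠ 0 →
    {k : ℕ | 1 ≤ k ∧ lam k = z}.Finite ∧ {k : ℕ | 1 ≤ k ∧ lam k = z}.ncard = algMult A z

def IsSchurDecomp {H : Type*} [NormedAddCommGroup H] [InnerProductSpace ℂ H] [CompleteSpace H]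
    (A D N : H →L[ℂ] H) : Prop :=
  A = D + N ∧ IsCompactOperator D ∧ IsCompactOperator N ∧ IsStarNormal D ∧
  (∀ z : ℂ, z ≠ 0 → algMult D z = algMult A z) ∧
  spectrum ℂ D = spectrum ℂ A ∧
  spectrum ℂ N = {0} ∧
  ∀ z : ℂ, z ∉ spectrum ℂ A →
    spectrum ℂ (Ring.inverse (algebraMap ℂ (H →L[ℂ] H) z - D) * N) = {0}

def Fw (C : ℝ) (w : ℕ → ℝ) (r : ℝ) : ℝ :=
  (1 + r * w 1) *
    (1 + ∑' k : ℕ, (∏ n ∈ Finset.Icc 1 (k + 1), w n) ^ 2 * (C * r) ^ (2 * (k + 1)))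

def Ftilde (C : ℝ) (w : ℕ → ℝ) (r : ℝ) : ℝ := r * Fw C w r

def specVar (s t : Set ℂ) : ℝ := ⨆ z : s, Metric.infDist (z : ℂ) t

def hausD (s t : Set ℂ) : ℝ := max (specVar s t) (specVar t s)

def pseudoSpec {H : Type*} [NormedAddCommGroup H] [NormedSpace ℂ H] [CompleteSpace H]
    (ε : ℝ) (A : H →L[ℂ] H) : Set ℂ :=
  spectrum ℂ A ∪ {z : ℂ | z ∉ spectrum ℂ A ∧ 1 / ε < ‖resolvent A z‖}

universe u₁ u₂ u₃ u₄

theorem LinearMap.exists_mem_ne_zero_map_eq_zero_of_rank_lt {K V W : Type*} [DivisionRing K]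
    [AddCommGroup V] [Module K V] [AddCommGroup W] [Module K W] (f : V →ₗ[K] W)
    (S : Submodule K V) [FiniteDimensional K S] (h : f.rank < Module.finrank K S) :
    ∃ x ∈ S, x ≠ 0 ∧ f x = 0 := by
  by_contra! hS
  have : FiniteDimensional K (range f) :=
    Module.rank_lt_aleph0_iff.mp (h.trans Cardinal.natCast_lt_aleph0)
  have hinj : Function.Injective (f.rangeRestrict.domRestrict S) := by
    rw [← LinearMap.ker_eq_bot, Submodule.eq_bot_iff]
    intro x hx
    by_contra hx0
    exact hS x x.2 (by simpa using hx0) (by simpa using congrArg Subtype.val hx)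
  have hle := LinearMap.finrank_le_finrank_of_injective hinj
  rw [LinearMap.rank, ← Module.finrank_eq_rank, Nat.cast_lt] at h
  exact hle.not_gt h

theorem LinearMap.rank_comp_comp_lt_of_rank_lt {K : Type*} {U : Type u₁} {V : Type u₂}
    {W : Type u₃} {X : Type u₄} [DivisionRing K] [AddCommGroup U] [Module K U] [AddCommGroup V]
    [Module K V] [AddCommGroup W] [Module K W] [AddCommGroup X] [Module K X]
    (g : V →ₗ[K] W) (f : W →ₗ[K] X) (c : U →ₗ[K] V) {k : ℕ} (h : g.rank < k) :
    (f ∘ₗ g ∘ₗ c).rank < k := by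
  have h₁ := LinearMap.lift_rank_comp_le_right (g ∘ₗ c) f
  have h₂ : Cardinal.lift.{u₄} (g ∘ₗ c).rank ≤ Cardinal.lift.{u₄} g.rank :=
    Cardinal.lift_le.mpr (LinearMap.rank_comp_le_left c g)
  have h₃ : Cardinal.lift.{u₄} g.rank < Cardinal.lift.{u₄} (k : Cardinal.{u₃}) :=
    Cardinal.lift_lt.mpr h
  rw [Cardinal.lift_natCast] at h₃
  have h₄ := h₁.trans_lt (h₂.trans_lt h₃)
  rwa [← Cardinal.lift_natCast.{u₃}, Cardinal.lift_lt] at h₄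

theorem ContinuousLinearMap.isCompactOperator_of_finiteDimensional_range {𝕜 E F : Type*}
    [RCLike 𝕜] [NormedAddCommGroup E] [NormedSpace 𝕜 E] [NormedAddCommGroup F]
    [NormedSpace 𝕜 F] (T : E →L[𝕜] F)
    [FiniteDimensional 𝕜 (LinearMap.range (T : E →ₗ[𝕜] F))] : IsCompactOperator T :=
  (isCompactOperator_of_locallyCompactSpace_dom T.rangeRestrict).continuous_comp
    continuous_subtype_val

section ApproximationNumbers

variable {E F E' F' : Type*} [NormedAddCommGroup E] [NormedSpace ℂ E]
  [NormedAddCommGroup F] [NormedSpace ℂ F] [NormedAddCommGroup E'] [NormedSpace ℂ E']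
  [NormedAddCommGroup F'] [NormedSpace ℂ F']

theorem sNum_le_norm_sub {k : ℕ} (A : E →L[ℂ] F) {G : E →L[ℂ] F}
    (hG : (G : E →ₗ[ℂ] F).rank < k) : sNum k A ≤ ‖A - G‖ :=
  csInf_le ⟨0, by rintro _ ⟨_, -, rfl⟩; exact norm_nonneg _⟩ ⟨G, hG, rfl⟩

theorem le_sNum {k : ℕ} (hk : k ≠ 0) {A : E →L[ℂ] F} {c : ℝ}
    (h : ∀ G : E →L[ℂ] F, (G : E →ₗ[ℂ] F).rank < k → c ≤ ‖A - G‖) : c ≤ sNum k A := by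
  refine le_csInf ⟨_, 0, ?_, rfl⟩ (by rintro _ ⟨G, hG, rfl⟩; exact h G hG)
  simpa [LinearMap.range_zero] using Nat.pos_of_ne_zero hk

theorem le_sNum_of_le_norm_apply (A : E →L[ℂ] F) {k : ℕ} (hk : k ≠ 0) (S : Submodule ℂ E)
    [FiniteDimensional ℂ S] (hS : k ≤ Module.finrank ℂ S) {c : ℝ}
    (hA : ∀ x ∈ S, c * ‖x‖ ≤ ‖A x‖) : c ≤ sNum k A := by
  refine le_sNum hk fun G hG => ?_
  obtain ⟨x, hxS, hx0, hGx⟩ := (G : E →ₗ[ℂ] F).exists_mem_ne_zero_map_eq_zero_of_rank_lt S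
    (hG.trans_le (by exact_mod_cast hS))
  refine le_of_mul_le_mul_right ?_ (norm_pos_iff.mpr hx0)
  calc c * ‖x‖ ≤ ‖A x‖ := hA x hxS
    _ = ‖(A - G) x‖ := by simp [show G x = 0 from hGx]
    _ ≤ ‖A - G‖ * ‖x‖ := (A - G).le_opNorm x

theorem sNum_comp_comp_le (A : E →L[ℂ] F) {B : F →L[ℂ] F'} {C : E' →L[ℂ] E}
    (hB : ‖B‖ ≤ 1) (hC : ‖C‖ ≤ 1) (k : ℕ) : sNum k (B ∘L A ∘L C) ≤ sNum k A := by
  rcases eq_or_ne k 0 with rfl | hk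
  · simp [sNum]
  refine le_sNum hk fun G hG => ?_
  have hrank : ((B ∘L G ∘L C : E' →L[ℂ] F') : E' →ₗ[ℂ] F').rank < k :=
    LinearMap.rank_comp_comp_lt_of_rank_lt (G : E →ₗ[ℂ] F) (B : F →ₗ[ℂ] F') (C : E' →ₗ[ℂ] E) hG
  calc sNum k (B ∘L A ∘L C) ≤ ‖B ∘L A ∘L C - B ∘L G ∘L C‖ := sNum_le_norm_sub _ hrank
    _ = ‖B ∘L (A - G) ∘L C‖ := by
      simp only [ContinuousLinearMap.sub_comp, ContinuousLinearMap.comp_sub]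
    _ ≤ ‖B‖ * (‖A - G‖ * ‖C‖) :=
      (B.opNorm_comp_le _).trans (by gcongr; exact (A - G).opNorm_comp_le C)
    _ ≤ 1 * (‖A - G‖ * 1) := by gcongr
    _ = ‖A - G‖ := by ring

theorem sNum_conj_linearIsometryEquiv (A : E →L[ℂ] F) (e₁ : E ≃ₗᵢ[ℂ] E') (e₂ : F ≃ₗᵢ[ℂ] F')
    (k : ℕ) :
    sNum k (e₂.toLinearIsometry.toContinuousLinearMap ∘L A ∘L
      e₁.symm.toLinearIsometry.toContinuousLinearMap) = sNum k A := by
  refine le_antisymm (sNum_comp_comp_le A (LinearIsometry.norm_toContinuousLinearMap_le _)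
    (LinearIsometry.norm_toContinuousLinearMap_le _) k) ?_
  have hA : A = e₂.symm.toLinearIsometry.toContinuousLinearMap ∘L
      (e₂.toLinearIsometry.toContinuousLinearMap ∘L A ∘L
        e₁.symm.toLinearIsometry.toContinuousLinearMap) ∘L
      e₁.toLinearIsometry.toContinuousLinearMap := by
    ext x
    simp
  conv_lhs => rw [hA]
  exact sNum_comp_comp_le _ (LinearIsometry.norm_toContinuousLinearMap_le _)
    (LinearIsometry.norm_toContinuousLinearMap_le _) k

end ApproximationNumbers

theorem MemE.mono {E F : Type*} [NormedAddCommGroup E] [NormedSpace ℂ E] [NormedAddCommGroup F]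
    [NormedSpace ℂ F] {v w : ℕ → ℝ} {A : E →L[ℂ] F} (hA : MemE v A) {M : ℝ} (hM₀ : 0 ≤ M)
    (hvw : ∀ k, 1 ≤ k → v k ≤ M * w k) : MemE w A := by
  obtain ⟨hAc, N, hN₀, hN⟩ := hA
  refine ⟨hAc, N * M, mul_nonneg hN₀ hM₀, fun k hk => ?_⟩
  calc sNum k A ≤ N * v k := hN k hk
    _ ≤ N * (M * w k) := mul_le_mul_of_nonneg_left (hvw k hk) hN₀
    _ = N * M * w k := (mul_assoc _ _ _).symm

section SequenceSpaces

open scoped ENNReal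

variable {α : Type*} {p : ℝ≥0∞}

theorem Memℓp.mul_of_infty {R : Type*} [NormedRing R] {a x : α → R} (ha : Memℓp a ∞)
    (hx : Memℓp x p) : Memℓp (fun i => a i * x i) p := by
  obtain ⟨C, hC⟩ := ha.bddAbove
  exact (hx.norm.const_mul C).mono fun i =>
    (norm_mul_le _ _).trans (mul_le_mul_of_nonneg_right (hC ⟨i, rfl⟩) (norm_nonneg _))

theorem Memℓp.indicator {E : Type*} [NormedAddCommGroup E] {f : α → E} (hf : Memℓp f p)
    (s : Set α) : Memℓp (s.indicator f) p :=
  hf.mono' fun i => norm_indicator_le_norm_self f i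

variable [Fact (1 ≤ p)]

theorem lp.norm_le_mul_norm_of_forall_norm_le {E F : α → Type*} [∀ i, NormedAddCommGroup (E i)]
    [∀ i, NormedAddCommGroup (F i)] [∀ i, NormedSpace ℝ (F i)] {C : ℝ} (hC : 0 ≤ C)
    {x : lp E p} {y : lp F p} (h : ∀ i, ‖x i‖ ≤ C * ‖y i‖) : ‖x‖ ≤ C * ‖y‖ := by
  have hp : p ≠ 0 := (zero_lt_one.trans_le Fact.out).ne'
  calc ‖x‖ ≤ ‖C • y‖ := lp.norm_mono hp fun i => by
          simpa [lp.coeFn_smul, norm_smul, abs_of_nonneg hC] using h i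
    _ = C * ‖y‖ := by rw [norm_smul, Real.norm_of_nonneg hC]

theorem lp.mul_norm_le_norm_of_forall_mul_norm_le {E F : α → Type*}
    [∀ i, NormedAddCommGroup (E i)] [∀ i, NormedSpace ℝ (E i)] [∀ i, NormedAddCommGroup (F i)]
    {C : ℝ} (hC : 0 ≤ C) {x : lp E p} {y : lp F p} (h : ∀ i, C * ‖x i‖ ≤ ‖y i‖) :
    C * ‖x‖ ≤ ‖y‖ := by
  have hp : p ≠ 0 := (zero_lt_one.trans_le Fact.out).ne'
  calc C * ‖x‖ = ‖C • x‖ := by rw [norm_smul, Real.norm_of_nonneg hC]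
    _ ≤ ‖y‖ := lp.norm_mono hp fun i => by
          simpa [lp.coeFn_smul, norm_smul, abs_of_nonneg hC] using h i

variable {𝕜 : Type*} [RCLike 𝕜]

variable (p) in
def lp.diagonal (a : α → 𝕜) (ha : Memℓp a ∞) :
    lp (fun _ : α => 𝕜) p →L[𝕜] lp (fun _ : α => 𝕜) p :=
  LinearMap.mkContinuous
    { toFun := fun x => ⟨fun i => a i * x i, ha.mul_of_infty (lp.memℓp x)⟩
      map_add' := fun x y => lp.ext <| funext fun i => mul_add _ _ _
      map_smul' := fun c x => lp.ext <| funext fun i => mul_left_comm _ _ _ }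
    ‖(⟨a, ha⟩ : lp (fun _ : α => 𝕜) ∞)‖
    (fun x => lp.norm_le_mul_norm_of_forall_norm_le (norm_nonneg _) fun i => by
      show ‖a i * x i‖ ≤ _
      simpa only [norm_mul] using mul_le_mul_of_nonneg_right
        (lp.norm_apply_le_norm ENNReal.top_ne_zero (⟨a, ha⟩ : lp (fun _ : α => 𝕜) ∞) i)
        (norm_nonneg (x i)))

@[simp]
theorem lp.diagonal_apply (a : α → 𝕜) (ha : Memℓp a ∞) (x : lp (fun _ : α => 𝕜) p) (i : α) :
    lp.diagonal p a ha x i = a i * x i :=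
  rfl

theorem lp.norm_diagonal_le {a : α → 𝕜} (ha : Memℓp a ∞) {C : ℝ} (hC : 0 ≤ C)
    (h : ∀ i, ‖a i‖ ≤ C) : ‖lp.diagonal p a ha‖ ≤ C :=
  ContinuousLinearMap.opNorm_le_bound _ hC fun x =>
    lp.norm_le_mul_norm_of_forall_norm_le hC fun i => by
      rw [lp.diagonal_apply, norm_mul]
      exact mul_le_mul_of_nonneg_right (h i) (norm_nonneg _)

theorem lp.diagonal_sub {a b : α → 𝕜} (ha : Memℓp a ∞) (hb : Memℓp b ∞) :
    lp.diagonal p a ha - lp.diagonal p b hb = lp.diagonal p (a - b) (ha.sub hb) := by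
  ext x i
  simp [sub_mul]

end SequenceSpaces

section FirstCoordinates

open scoped ENNReal

variable (𝕜 : Type*) [NormedField 𝕜] (p : ℝ≥0∞)

def lp.firstCoords (m : ℕ) : Submodule 𝕜 (lp (fun _ : ℕ => 𝕜) p) :=
  Submodule.span 𝕜 (Set.range fun i : Fin m => lp.single p (i : ℕ) (1 : 𝕜))

variable {𝕜 p}

theorem lp.mem_firstCoords_iff {m : ℕ} {y : lp (fun _ : ℕ => 𝕜) p} :
    y ∈ lp.firstCoords 𝕜 p m ↔ ∀ n, m ≤ n → y n = 0 := by
  constructor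
  · intro hy
    induction hy using Submodule.span_induction with
    | mem z hz =>
      obtain ⟨i, rfl⟩ := hz
      intro n hn
      exact lp.single_apply_ne p _ _ (by omega)
    | zero => intro n _; rfl
    | add y z _ _ hy hz => intro n hn; simp [hy n hn, hz n hn]
    | smul c y _ hy => intro n hn; simp [hy n hn]
  · intro hy
    have hsum : y = ∑ i : Fin m, y i • lp.single p (i : ℕ) (1 : 𝕜) := by
      ext n
      rw [Fin.sum_univ_eq_sum_range (fun i => y i • lp.single p i (1 : 𝕜))]
      simp only [lp.coeFn_sum, Finset.sum_apply, lp.coeFn_smul, Pi.smul_apply, lp.single_apply,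
        Pi.single_apply, smul_eq_mul, mul_ite, mul_one, mul_zero, Finset.sum_ite_eq,
        Finset.mem_range]
      split_ifs with hn
      · rfl
      · exact hy n (not_lt.mp hn)
    rw [hsum]
    exact Submodule.sum_mem _ fun i _ => Submodule.smul_mem _ _ (Submodule.subset_span ⟨i, rfl⟩)

instance (m : ℕ) : FiniteDimensional 𝕜 (lp.firstCoords 𝕜 p m) :=
  FiniteDimensional.span_of_finite 𝕜 (Set.finite_range _)

theorem lp.finrank_firstCoords (m : ℕ) : Module.finrank 𝕜 (lp.firstCoords 𝕜 p m) = m := by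
  rw [lp.firstCoords, finrank_span_eq_card, Fintype.card_fin]
  rw [Fintype.linearIndependent_iff]
  intro g hg i
  have := congrArg (fun y : lp (fun _ : ℕ => 𝕜) p => y i) hg
  simp only [lp.coeFn_sum, Finset.sum_apply, lp.coeFn_smul, Pi.smul_apply,
    lp.single_apply] at this
  simpa [Pi.single_apply, Fin.val_inj] using this

end FirstCoordinates

section DiagonalTruncation

open scoped ENNReal

variable {p : ℝ≥0∞} [Fact (1 ≤ p)] {𝕜 : Type*} [RCLike 𝕜] {a : ℕ → 𝕜}

theorem lp.norm_diagonal_sub_diagonal_indicator_le (ha : Memℓp a ∞) (m : ℕ) {C : ℝ}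
    (hC : 0 ≤ C) (h : ∀ n, m ≤ n → ‖a n‖ ≤ C) :
    ‖lp.diagonal p a ha - lp.diagonal p ((Set.Iio m).indicator a) (ha.indicator _)‖ ≤ C := by
  rw [lp.diagonal_sub]
  refine lp.norm_diagonal_le _ hC fun n => ?_
  rcases lt_or_ge n m with hn | hn
  · simpa [hn] using hC
  · simpa [Set.indicator_of_notMem (Set.notMem_Iio.mpr hn)] using h n hn

theorem lp.range_diagonal_indicator_le (ha : Memℓp a ∞) (m : ℕ) :
    LinearMap.range (lp.diagonal p ((Set.Iio m).indicator a) (ha.indicator _) :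
      lp (fun _ : ℕ => 𝕜) p →ₗ[𝕜] lp (fun _ : ℕ => 𝕜) p) ≤ lp.firstCoords 𝕜 p m := by
  rintro _ ⟨x, rfl⟩
  refine lp.mem_firstCoords_iff.mpr fun n hn => ?_
  simp [Set.indicator_of_notMem (Set.notMem_Iio.mpr hn)]

theorem lp.mul_norm_le_norm_diagonal_apply (ha : Memℓp a ∞) {c : ℝ} (hc : 0 ≤ c) {m : ℕ}
    (h : ∀ n < m, c ≤ ‖a n‖) {y : lp (fun _ : ℕ => 𝕜) p} (hy : y ∈ lp.firstCoords 𝕜 p m) :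
    c * ‖y‖ ≤ ‖lp.diagonal p a ha y‖ :=
  lp.mul_norm_le_norm_of_forall_mul_norm_le hc fun n => by
    rw [lp.diagonal_apply, norm_mul]
    rcases lt_or_ge n m with hn | hn
    · exact mul_le_mul_of_nonneg_right (h n hn) (norm_nonneg _)
    · simp [lp.mem_firstCoords_iff.mp hy n hn]

theorem lp.isCompactOperator_diagonal (ha : Memℓp a ∞)
    (ha₀ : Tendsto (fun n => ‖a n‖) atTop (𝓝 0)) : IsCompactOperator (lp.diagonal p a ha) := by
  refine isCompactOperator_of_tendsto (l := atTop)
    (F := fun m => lp.diagonal p ((Set.Iio m).indicator a) (ha.indicator _)) ?_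
    (Eventually.of_forall fun m => ?_)
  · rw [Metric.tendsto_atTop]
    intro ε hε
    obtain ⟨N, hN⟩ := Metric.tendsto_atTop.mp ha₀ (ε / 2) (half_pos hε)
    refine ⟨N, fun m hm => ?_⟩
    rw [dist_eq_norm, norm_sub_rev]
    refine (lp.norm_diagonal_sub_diagonal_indicator_le ha m (half_pos hε).le
      fun n hn => ?_).trans_lt (half_lt_self hε)
    simpa using (hN n (hm.trans hn)).le
  · have := Submodule.finiteDimensional_of_le (lp.range_diagonal_indicator_le (p := p) ha m)
    exact ContinuousLinearMap.isCompactOperator_of_finiteDimensional_range _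

theorem sNum_succ_lp_diagonal {a : ℕ → ℂ} (ha : Memℓp a ∞) (ha_anti : Antitone fun n => ‖a n‖)
    (k : ℕ) : sNum (k + 1) (lp.diagonal p a ha) = ‖a k‖ := by
  apply le_antisymm
  · have hrank : (lp.diagonal p ((Set.Iio k).indicator a) (ha.indicator _) :
        lp (fun _ : ℕ => ℂ) p →ₗ[ℂ] lp (fun _ : ℕ => ℂ) p).rank < (k + 1 : ℕ) := by
      refine (Submodule.rank_mono (lp.range_diagonal_indicator_le ha k)).trans_lt ?_
      rw [← Module.finrank_eq_rank, lp.finrank_firstCoords, Nat.cast_lt]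
      exact k.lt_succ_self
    exact (sNum_le_norm_sub _ hrank).trans
      (lp.norm_diagonal_sub_diagonal_indicator_le ha k (norm_nonneg _) fun n hn => ha_anti hn)
  · refine le_sNum_of_le_norm_apply _ k.succ_ne_zero (lp.firstCoords ℂ p (k + 1))
      (lp.finrank_firstCoords _).ge fun y hy => ?_
    exact lp.mul_norm_le_norm_diagonal_apply ha (norm_nonneg _)
      (fun n hn => ha_anti (Nat.lt_succ_iff.mp hn)) hy

end DiagonalTruncation

section SeparableHilbert

open scoped lp

variable {𝕜 H : Type*} [RCLike 𝕜] [NormedAddCommGroup H] [InnerProductSpace 𝕜 H]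

theorem Orthonormal.countable_of_separableSpace [TopologicalSpace.SeparableSpace H] {ι : Type*}
    {v : ι → H} (hv : Orthonormal 𝕜 v) : Countable ι := by
  refine Pairwise.countable_of_isOpen_disjoint (s := fun i => Metric.ball (v i) (1 / 2))
    (fun i j hij => Metric.ball_disjoint_ball ?_) (fun _ => Metric.isOpen_ball)
    (fun i => ⟨v i, Metric.mem_ball_self one_half_pos⟩)
  have hsq : dist (v i) (v j) ^ 2 = 2 := by
    rw [dist_eq_norm, @norm_sub_sq 𝕜, hv.inner_eq_zero hij, hv.1 i, hv.1 j]
    norm_num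
  nlinarith [dist_nonneg (x := v i) (y := v j)]

theorem exists_linearIsometryEquiv_lp_nat [CompleteSpace H] [TopologicalSpace.SeparableSpace H]
    (hH : ¬ FiniteDimensional 𝕜 H) : Nonempty (H ≃ₗᵢ[𝕜] ℓ²(ℕ, 𝕜)) := by
  obtain ⟨w, b, -⟩ := exists_hilbertBasis 𝕜 H
  have := b.orthonormal.countable_of_separableSpace
  have : Infinite w := by
    by_contra hfin
    have : Fintype w := @Fintype.ofFinite _ (not_infinite_iff_finite.mp hfin)
    exact hH (.of_basis b.toOrthonormalBasis.toBasis)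
  obtain ⟨e⟩ : Nonempty (ℕ ≃ w) := inferInstance
  refine ⟨(HilbertBasis.mk (b.orthonormal.comp _ e.injective) ?_).repr⟩
  rw [e.surjective.range_comp]
  exact b.dense_span.ge

end SeparableHilbert

variable {H₁ H₂ H₃ H₄ : Type*}
  [NormedAddCommGroup H₁] [InnerProductSpace ℂ H₁] [CompleteSpace H₁]
    [TopologicalSpace.SeparableSpace H₁]
  [NormedAddCommGroup H₂] [InnerProductSpace ℂ H₂] [CompleteSpace H₂]
    [TopologicalSpace.SeparableSpace H₂]
  [NormedAddCommGroup H₃] [InnerProductSpace ℂ H₃] [CompleteSpace H₃]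
    [TopologicalSpace.SeparableSpace H₃]
  [NormedAddCommGroup H₄] [InnerProductSpace ℂ H₄] [CompleteSpace H₄]
    [TopologicalSpace.SeparableSpace H₄]

theorem exists_isCompactOperator_sNum_eq (hinf₁ : ¬ FiniteDimensional ℂ H₁)
    (hinf₂ : ¬ FiniteDimensional ℂ H₂) {v : ℕ → ℝ} (hv : IsWeight v) :
    ∃ A : H₁ →L[ℂ] H₂, IsCompactOperator A ∧ ∀ k, 1 ≤ k → sNum k A = v k := by
  obtain ⟨e₁⟩ := exists_linearIsometryEquiv_lp_nat hinf₁
  obtain ⟨e₂⟩ := exists_linearIsometryEquiv_lp_nat hinf₂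
  set a : ℕ → ℂ := fun n => (v (n + 1) : ℂ)
  have ha_norm : ∀ n, ‖a n‖ = v (n + 1) := fun n => Complex.norm_of_nonneg (hv.2.1 _ (by omega))
  have ha_anti : Antitone fun n => ‖a n‖ :=
    antitone_nat_of_succ_le fun n => by simpa only [ha_norm] using hv.1 (n + 1) (by omega)
  have ha : Memℓp a ⊤ :=
    memℓp_infty_iff.mpr ⟨‖a 0‖, by rintro _ ⟨n, rfl⟩; exact ha_anti n.zero_le⟩
  have ha₀ : Tendsto (fun n => ‖a n‖) atTop (𝓝 0) := by
    simpa only [ha_norm] using (tendsto_add_atTop_iff_nat 1).mpr hv.2.2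
  set e₁L := e₁.toLinearIsometry.toContinuousLinearMap
  set e₂L := e₂.symm.toLinearIsometry.toContinuousLinearMap
  refine ⟨e₂L ∘L lp.diagonal 2 a ha ∘L e₁L,
    (((lp.isCompactOperator_diagonal ha ha₀).comp_clm e₁L).clm_comp e₂L :), fun k hk => ?_⟩
  obtain ⟨j, rfl⟩ := Nat.exists_eq_add_of_le' hk
  have := sNum_conj_linearIsometryEquiv (lp.diagonal 2 a ha) e₁.symm e₂.symm (j + 1)
  rw [LinearIsometryEquiv.symm_symm] at this
  rw [this, sNum_succ_lp_diagonal ha ha_anti, ha_norm]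

theorem stmt_0_general
    (hinf₁ : ¬ FiniteDimensional ℂ H₁) (hinf₂ : ¬ FiniteDimensional ℂ H₂)
    (v w : ℕ → ℝ) (hv : IsWeight v) :
    (∀ A : H₁ →L[ℂ] H₂, MemE v A → MemE w A) ↔
      ∃ M : ℝ, 0 ≤ M ∧ ∀ k, 1 ≤ k → v k ≤ M * w k := by
  constructor
  · intro h
    obtain ⟨A, hAc, hsA⟩ := exists_isCompactOperator_sNum_eq hinf₁ hinf₂ hv
    obtain ⟨-, M, hM₀, hM⟩ := h A ⟨hAc, 1, zero_le_one, fun k hk => by rw [one_mul, hsA k hk]⟩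
    exact ⟨M, hM₀, fun k hk => hsA k hk ▸ hM k hk⟩
  · rintro ⟨M, hM₀, hvw⟩ A hA
    exact hA.mono hM₀ hvw

/-- For infinite-dimensional separable Hilbert spaces,
`E_v ⊆ E_w` iff `v_k ≤ M·w_k` for all `k ≥ 1` and some `M ≥ 0`. -/
theorem stmt_0
    (hinf₁ : ¬ FiniteDimensional ℂ H₁) (hinf₂ : ¬ FiniteDimensional ℂ H₂)
    (v w : ℕ → ℝ) (hv : IsWeight v) (hw : IsWeight w) :
    (∀ A : H₁ →L[ℂ] H₂, MemE v A → MemE w A) ↔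
      ∃ M : ℝ, 0 ≤ M ∧ ∀ k, 1 ≤ k → v k ≤ M * w k :=
  stmt_0_general hinf₁ hinf₂ v w hv

end
end

section
/- Let w be a weight sequence, H a separable complex Hilbert space, and A ∈ E_w(H) a quasi-nilpotent compact operator. Suppose C > 0 is a constant such that ‖A^{2k}‖ ≤ C^{2k}·(s_1(A)⋯s_k(A))² for every k ≥ 1. Then I − A is invertible and ‖(I−A)^{-1}‖ ≤ F_w(|A|_w), where F_w(r) = (1 + r·w_1)·(1 + Σ_{k=1}^∞ (w_1⋯w_k)²·(Cr)^{2k}). -/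
/-!
By the Dostanić inequality and `s_k(A) ≤ |A|_w w_k`, the even powers of `A` satisfy
`‖A^{2k}‖ ≤ (w_1 ⋯ w_k)² (C |A|_w)^{2k}`, and these bounds are summable by the ratio test
because `w_k → 0`. Hence the Neumann series `∑ (A²)^k` converges to `(I - A²)⁻¹`, so that
`(I - A)⁻¹ = (I + A) ∑ (A²)^k`, and `‖I + A‖ ≤ 1 + s_1(A) ≤ 1 + |A|_w w_1`.
-/

open Filter Topology

noncomputable section

open Finset

section GeometricSeries

variable {R : Type*} [Ring R] [TopologicalSpace R] [IsTopologicalRing R] [T2Space R]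

theorem Summable.isUnit_one_sub {x : R} (h : Summable (x ^ ·)) : IsUnit (1 - x) :=
  ⟨⟨1 - x, ∑' i, x ^ i, h.one_sub_mul_tsum_pow, h.tsum_pow_mul_one_sub⟩, rfl⟩

theorem Summable.inverse_one_sub {x : R} (h : Summable (x ^ ·)) :
    Ring.inverse (1 - x) = ∑' i, x ^ i :=
  Ring.inverse_unit ⟨1 - x, ∑' i, x ^ i, h.one_sub_mul_tsum_pow, h.tsum_pow_mul_one_sub⟩

end GeometricSeries

theorem Ring.isUnit_one_sub_and_inverse_eq_of_isUnit_one_sub_sq {R : Type*} [Ring R] {a : R}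
    (h : IsUnit (1 - a ^ 2)) :
    IsUnit (1 - a) ∧ Ring.inverse (1 - a) = (1 + a) * Ring.inverse (1 - a ^ 2) := by
  have hfac : 1 - a ^ 2 = (1 - a) * (1 + a) := by noncomm_ring
  have hcomm : Commute (1 - a) (1 + a) :=
    (Commute.one_right _).add_right ((Commute.one_left a).sub_left (Commute.refl a))
  obtain ⟨hminus, hplus⟩ := hcomm.isUnit_mul_iff.1 (hfac ▸ h)
  refine ⟨hminus, ?_⟩
  rw [hfac, Ring.mul_inverse_rev' hcomm, Ring.mul_inverse_cancel_left _ _ hplus]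

theorem isUnit_one_sub_and_norm_inverse_le_of_norm_pow_two_mul_le {R : Type*} [NormedRing R]
    [CompleteSpace R] {a : R} {b : ℕ → ℝ} (hb : Summable b) (hab : ∀ k, ‖a ^ (2 * k)‖ ≤ b k) :
    IsUnit (1 - a) ∧ ‖Ring.inverse (1 - a)‖ ≤ ‖1 + a‖ * ∑' k, b k := by
  have hab' : ∀ k, ‖(a ^ 2) ^ k‖ ≤ b k := fun k => pow_mul a 2 k ▸ hab k
  have hsum : Summable ((a ^ 2) ^ ·) := .of_norm_bounded hb hab'
  obtain ⟨hunit, hinv⟩ :=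
    Ring.isUnit_one_sub_and_inverse_eq_of_isUnit_one_sub_sq hsum.isUnit_one_sub
  refine ⟨hunit, ?_⟩
  rw [hinv, hsum.inverse_one_sub]
  exact (norm_mul_le _ _).trans
    (mul_le_mul_of_nonneg_left (tsum_of_norm_bounded hb.hasSum hab') (norm_nonneg _))

theorem ContinuousLinearMap.norm_one_le (E : Type*) [NormedAddCommGroup E] [NormedSpace ℂ E] :
    ‖(1 : E →L[ℂ] E)‖ ≤ 1 :=
  ContinuousLinearMap.norm_id_le

section ApproximationNumbers

variable {E F : Type*} [NormedAddCommGroup E] [NormedSpace ℂ E] [NormedAddCommGroup F]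
  [NormedSpace ℂ F]

theorem sNum_nonneg (k : ℕ) (A : E →L[ℂ] F) : 0 ≤ sNum k A :=
  Real.sInf_nonneg (by rintro x ⟨T, -, rfl⟩; exact norm_nonneg _)

theorem sNum_one (A : E →L[ℂ] F) : sNum 1 A = ‖A‖ := by
  have hrank : ∀ T : E →L[ℂ] F,
      Module.rank ℂ (LinearMap.range (T : E →ₗ[ℂ] F)) < ((1 : ℕ) : Cardinal) ↔ T = 0 := by
    intro T
    rw [Nat.cast_one, Cardinal.lt_one_iff, Submodule.rank_eq_zero, LinearMap.range_eq_bot,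
      ← ContinuousLinearMap.toLinearMap_zero, ContinuousLinearMap.coe_inj]
  have hmem : ‖A‖ ∈ {c : ℝ | ∃ T : E →L[ℂ] F,
      Module.rank ℂ (LinearMap.range (T : E →ₗ[ℂ] F)) < ((1 : ℕ) : Cardinal) ∧ c = ‖A - T‖} :=
    ⟨0, (hrank 0).2 rfl, by rw [sub_zero]⟩
  refine le_antisymm (csInf_le ⟨0, ?_⟩ hmem) (le_csInf ⟨_, hmem⟩ ?_)
  · rintro x ⟨T, -, rfl⟩
    exact norm_nonneg _
  · rintro x ⟨T, hT, rfl⟩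
    rw [(hrank T).1 hT, sub_zero]

theorem sNum_le_gaugeE_mul {w : ℕ → ℝ} (hw : ∀ k, 1 ≤ k → 0 ≤ w k) {A : E →L[ℂ] F}
    (hA : MemE w A) {k : ℕ} (hk : 1 ≤ k) : sNum k A ≤ gaugeE w A * w k := by
  obtain ⟨-, M, hM, hMA⟩ := hA
  rcases (hw k hk).eq_or_lt with hwk | hwk
  · simpa [← hwk] using hMA k hk
  · rw [← div_le_iff₀ hwk]
    exact le_csInf ⟨M, hM, hMA⟩ fun N hN => (div_le_iff₀ hwk).2 (hN.2 k hk)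

end ApproximationNumbers

def fwTerm (C : ℝ) (w : ℕ → ℝ) (r : ℝ) (k : ℕ) : ℝ :=
  (∏ n ∈ Icc 1 k, w n) ^ 2 * (C * r) ^ (2 * k)

section FwTerm

variable (C : ℝ) {w : ℕ → ℝ} (r : ℝ)

theorem fwTerm_nonneg (k : ℕ) : 0 ≤ fwTerm C w r k :=
  mul_nonneg (sq_nonneg _) ((even_two_mul k).pow_nonneg _)

theorem fwTerm_succ (k : ℕ) :
    fwTerm C w r (k + 1) = fwTerm C w r k * (w (k + 1) * (C * r)) ^ 2 := by
  simp only [fwTerm]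
  rw [prod_Icc_succ_top (Nat.le_add_left 1 k)]
  ring

theorem summable_fwTerm (hw : Tendsto w atTop (𝓝 0)) : Summable (fwTerm C w r) := by
  refine summable_of_ratio_norm_eventually_le (r := 1 / 2) (by norm_num) ?_
  have hratio : Tendsto (fun k => (w (k + 1) * (C * r)) ^ 2) atTop (𝓝 0) := by
    simpa using (((hw.comp (tendsto_add_atTop_nat 1)).mul_const (C * r)).pow 2)
  filter_upwards [hratio.eventually (eventually_le_nhds (by norm_num : (0 : ℝ) < 1 / 2))]
    with k hk
  rw [fwTerm_succ, norm_mul, mul_comm, norm_pow, Real.norm_eq_abs, sq_abs]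
  exact mul_le_mul_of_nonneg_right hk (norm_nonneg _)

theorem Fw_eq_mul_tsum_fwTerm (hw : Tendsto w atTop (𝓝 0)) :
    Fw C w r = (1 + r * w 1) * ∑' k, fwTerm C w r k := by
  rw [(summable_fwTerm C r hw).tsum_eq_zero_add]
  simp [Fw, fwTerm]

end FwTerm

theorem norm_pow_two_mul_le_fwTerm {H : Type*} [NormedAddCommGroup H] [NormedSpace ℂ H]
    {w : ℕ → ℝ} (hw : ∀ k, 1 ≤ k → 0 ≤ w k) {A : H →L[ℂ] H} (hA : MemE w A) {C : ℝ}
    (hDos : ∀ k, 1 ≤ k →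
      ‖A ^ (2 * k)‖ ≤ C ^ (2 * k) * (∏ n ∈ Icc 1 k, sNum n A) ^ 2) (k : ℕ) :
    ‖A ^ (2 * k)‖ ≤ fwTerm C w (gaugeE w A) k := by
  rcases Nat.eq_zero_or_pos k with rfl | hk
  · simpa [fwTerm] using ContinuousLinearMap.norm_one_le H
  calc ‖A ^ (2 * k)‖ ≤ C ^ (2 * k) * (∏ n ∈ Icc 1 k, sNum n A) ^ 2 := hDos k hk
    _ ≤ C ^ (2 * k) * (∏ n ∈ Icc 1 k, gaugeE w A * w n) ^ 2 := by
        have hprod : ∏ n ∈ Icc 1 k, sNum n A ≤ ∏ n ∈ Icc 1 k, gaugeE w A * w n :=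
          prod_le_prod (fun n _ => sNum_nonneg n A)
            fun n hn => sNum_le_gaugeE_mul hw hA (mem_Icc.1 hn).1
        exact mul_le_mul_of_nonneg_left
          (pow_le_pow_left₀ (prod_nonneg fun n _ => sNum_nonneg n A) hprod 2)
          ((even_two_mul k).pow_nonneg C)
    _ = fwTerm C w (gaugeE w A) k := by
        rw [prod_mul_distrib, prod_const, Nat.card_Icc, Nat.add_sub_cancel, fwTerm]
        ring

variable {H : Type*} [NormedAddCommGroup H] [InnerProductSpace ℂ H] [CompleteSpace H]
  [TopologicalSpace.SeparableSpace H]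

theorem stmt_7_general (w : ℕ → ℝ) (hw : IsWeight w)
    (A : H →L[ℂ] H) (hA : MemE w A)
    (C : ℝ)
    (hDos : ∀ k, 1 ≤ k →
      ‖A ^ (2 * k)‖ ≤ C ^ (2 * k) * (∏ n ∈ Finset.Icc 1 k, sNum n A) ^ 2) :
    IsUnit ((1 : H →L[ℂ] H) - A) ∧
      ‖Ring.inverse ((1 : H →L[ℂ] H) - A)‖ ≤ Fw C w (gaugeE w A) := by
  obtain ⟨-, hw0, hwlim⟩ := hw
  obtain ⟨hunit, hinv⟩ := isUnit_one_sub_and_norm_inverse_le_of_norm_pow_two_mul_le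
    (summable_fwTerm C _ hwlim) (norm_pow_two_mul_le_fwTerm hw0 hA hDos)
  refine ⟨hunit, hinv.trans ?_⟩
  have hnorm : ‖1 + A‖ ≤ 1 + gaugeE w A * w 1 :=
    calc ‖1 + A‖ ≤ ‖(1 : H →L[ℂ] H)‖ + ‖A‖ := norm_add_le _ _
      _ ≤ 1 + gaugeE w A * w 1 := add_le_add (ContinuousLinearMap.norm_one_le H)
          ((sNum_one A).ge.trans (sNum_le_gaugeE_mul hw0 hA le_rfl))
  rw [Fw_eq_mul_tsum_fwTerm C _ hwlim]
  exact mul_le_mul_of_nonneg_right hnorm (tsum_nonneg (fwTerm_nonneg C _))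

/-- resolvent bound at `z = 1` for a quasi-nilpotent `A ∈ E_w(H)`. -/
theorem stmt_7 (w : ℕ → ℝ) (hw : IsWeight w)
    (A : H →L[ℂ] H) (hA : MemE w A) (hqn : spectrum ℂ A = {0})
    (C : ℝ) (hC : 0 < C)
    (hDos : ∀ k, 1 ≤ k →
      ‖A ^ (2 * k)‖ ≤ C ^ (2 * k) * (∏ n ∈ Finset.Icc 1 k, sNum n A) ^ 2) :
    IsUnit ((1 : H →L[ℂ] H) - A) ∧
      ‖Ring.inverse ((1 : H →L[ℂ] H) - A)‖ ≤ Fw C w (gaugeE w A) :=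
  stmt_7_general w hw A hA C hDos

end
end

section
/- Let H be a separable complex Hilbert space and A a compact operator on H. Suppose there is a strictly increasing surjective function g : [0,∞) → [0,∞) and a constant K > 0 such that ‖(zI − A)^{-1}‖ ≤ (1/K)·g(K/d(z,σ(A))) for every z ∉ σ(A). Then for every bounded operator B on H with B ≠ A, d̂(σ(B),σ(A)) ≤ K·h(‖A−B‖/K), where h(r) = 1/g̃(1/r) for r > 0, and g̃ : [0,∞) → [0,∞) denotes the inverse of g. -/
open Filter Topology

noncomputable section

variable {H : Type*} [NormedAddCommGroup H] [InnerProductSpace ℂ H] [CompleteSpace H]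
  [TopologicalSpace.SeparableSpace H]

/-- Bauer–Fike: a point of `σ(b)` outside `σ(a)` forces `‖a - b‖ ‖(z - a)⁻¹‖ ≥ 1`, because
`z - b = (z - a) (1 + (z - a)⁻¹ (a - b))` would otherwise be a product of units. -/
theorem one_le_norm_sub_mul_norm_resolvent {𝕜 A : Type*} [NormedField 𝕜] [NormedRing A]
    [NormedAlgebra 𝕜 A] [CompleteSpace A] {a b : A} {z : 𝕜}
    (hb : z ∈ spectrum 𝕜 b) (ha : z ∉ spectrum 𝕜 a) :
    1 ≤ ‖a - b‖ * ‖resolvent a z‖ := by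
  by_contra! hlt
  obtain ⟨u, hu⟩ := not_not.mp ha
  have hres : resolvent a z = ↑u⁻¹ := by rw [resolvent, ← hu, Ring.inverse_unit]
  have hsmall : ‖-(↑u⁻¹ * (a - b))‖ < 1 := by
    rw [norm_neg, ← hres]
    exact (norm_mul_le _ _).trans_lt (mul_comm ‖a - b‖ _ ▸ hlt)
  have hfactor : algebraMap 𝕜 A z - b = ↑u * (1 - -(↑u⁻¹ * (a - b))) := by
    rw [sub_neg_eq_add, mul_add, mul_one, Units.mul_inv_cancel_left, hu]
    abel
  exact spectrum.mem_iff.mp hb (hfactor ▸ u.isUnit.mul (isUnit_one_sub_of_norm_lt_one hsmall))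

theorem StrictMonoOn.map_zero_eq_zero {g : ℝ → ℝ} (hmono : StrictMonoOn g (Set.Ici 0))
    (hmaps : ∀ x, 0 ≤ x → 0 ≤ g x) (hsurj : ∀ y, 0 ≤ y → ∃ x, 0 ≤ x ∧ g x = y) : g 0 = 0 := by
  obtain ⟨x, hx, hgx⟩ := hsurj 0 le_rfl
  rcases hx.eq_or_lt with rfl | hpos
  · exact hgx
  · have := hmono (Set.mem_Ici.mpr le_rfl) (Set.mem_Ici.mpr hx) hpos
    linarith [hmaps 0 le_rfl]

theorem StrictMonoOn.le_div_of_map_le_map_div {g : ℝ → ℝ} (hmono : StrictMonoOn g (Set.Ici 0))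
    {K c d : ℝ} (hK : 0 ≤ K) (hc : 0 < c) (hd : 0 ≤ d) (h : g c ≤ g (K / d)) : d ≤ K / c := by
  have hcd : c ≤ K / d := (hmono.le_iff_le hc.le (Set.mem_Ici.mpr (by positivity))).mp h
  rcases hd.eq_or_lt with rfl | hd
  · positivity
  · rw [le_div_iff₀ hd] at hcd
    rwa [le_div_iff₀ hc, mul_comm]

theorem specVar_le {s t : Set ℂ} {r : ℝ} (hr : 0 ≤ r) (h : ∀ z ∈ s, Metric.infDist z t ≤ r) :
    specVar s t ≤ r :=
  Real.iSup_le (fun z => h z z.2) hr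

theorem stmt_11_general (A : H →L[ℂ] H)
    (g gi : ℝ → ℝ) (K : ℝ) (hK : 0 < K)
    (hmono : StrictMonoOn g (Set.Ici 0))
    (hmaps : ∀ x, 0 ≤ x → 0 ≤ g x)
    (hsurj : ∀ y, 0 ≤ y → ∃ x, 0 ≤ x ∧ g x = y)
    (hgi₂ : ∀ y, 0 ≤ y → 0 ≤ gi y ∧ g (gi y) = y)
    (hres : ∀ z : ℂ, z ∉ spectrum ℂ A →
      ‖resolvent A z‖ ≤ (1 / K) * g (K / Metric.infDist z (spectrum ℂ A))) :
    ∀ B : H →L[ℂ] H, B ≠ A →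
      specVar (spectrum ℂ B) (spectrum ℂ A) ≤ K * (gi (K / ‖A - B‖))⁻¹ := by
  intro B hB
  have hAB : 0 < ‖A - B‖ := norm_pos_iff.mpr (sub_ne_zero.mpr hB.symm)
  obtain ⟨hc₀, hgc⟩ := hgi₂ (K / ‖A - B‖) (by positivity)
  have hc : 0 < gi (K / ‖A - B‖) := hc₀.lt_of_ne fun h => by
    rw [← h, hmono.map_zero_eq_zero hmaps hsurj] at hgc
    exact (div_pos hK hAB).ne hgc
  rw [← div_eq_mul_inv]
  refine specVar_le (by positivity) fun z hzB => ?_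
  by_cases hzA : z ∈ spectrum ℂ A
  · rw [Metric.infDist_zero_of_mem hzA]
    positivity
  refine hmono.le_div_of_map_le_map_div hK.le hc Metric.infDist_nonneg ?_
  have hinv : ‖A - B‖⁻¹ ≤ ‖resolvent A z‖ :=
    (inv_le_iff_one_le_mul₀' hAB).mpr (one_le_norm_sub_mul_norm_resolvent hzB hzA)
  calc g (gi (K / ‖A - B‖)) = K * ‖A - B‖⁻¹ := by rw [hgc, div_eq_mul_inv]
    _ ≤ K * ((1 / K) * g (K / Metric.infDist z (spectrum ℂ A))) :=
      mul_le_mul_of_nonneg_left (hinv.trans (hres z hzA)) hK.le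
    _ = g (K / Metric.infDist z (spectrum ℂ A)) := by field_simp

/-- the Bauer–Fike argument converting resolvent bounds into
spectral variation bounds. -/
theorem stmt_11 (A : H →L[ℂ] H) (hA : IsCompactOperator A)
    (g gi : ℝ → ℝ) (K : ℝ) (hK : 0 < K)
    (hmono : StrictMonoOn g (Set.Ici 0))
    (hmaps : ∀ x, 0 ≤ x → 0 ≤ g x)
    (hsurj : ∀ y, 0 ≤ y → ∃ x, 0 ≤ x ∧ g x = y)
    (hgi₁ : ∀ x, 0 ≤ x → gi (g x) = x)
    (hgi₂ : ∀ y, 0 ≤ y → 0 ≤ gi y ∧ g (gi y) = y)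
    (hres : ∀ z : ℂ, z ∉ spectrum ℂ A →
      ‖resolvent A z‖ ≤ (1 / K) * g (K / Metric.infDist z (spectrum ℂ A))) :
    ∀ B : H →L[ℂ] H, B ≠ A →
      specVar (spectrum ℂ B) (spectrum ℂ A) ≤ K * (gi (K / ‖A - B‖))⁻¹ :=
  stmt_11_general A g gi K hK hmono hmaps hsurj hgi₂ hres

end
end

section
/- Let p ∈ (0,∞) and let w_k = k^{-1/p} for k ≥ 1. Then for every k ≥ 1: (i) exp(−1/(p√k)) · e^{1/p}/k^{1/p} ≤ w̄_k ≤ e^{1/p}/k^{1/p}; (ii) exp(−3/(p√k)) · (2e)^{1/p}/k^{1/p} ≤ ẇ̄_k ≤ (2e)^{1/p}/k^{1/p}; and (iii) exp(−(6/p)√k) · (2e)^{k/p}/(k!)^{1/p} ≤ ∏_{n=1}^k ẇ̄_n ≤ (2e)^{k/p}/(k!)^{1/p}. -/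
open Filter Topology

noncomputable section

/-!
Since `∏_{n ≤ k} n^{-1/p} = (k!)^{-1/p}`, we have `log w̄_k = -log k! / (p k)`, so everything
follows from the Stirling-type bounds `k log k - k ≤ log k! ≤ k log k - k + √k`; the upper one
comes from the monotonicity of the Stirling sequence `k! / (√(2k) (k/e)^k)` together with
`1 + (log k) / 2 ≤ √k`. The doubled sequence is `ẇ̄_n = w̄_m` with `m = ⌈n/2⌉`, and
`n ≤ 2m ≤ n + 1` costs at most `2/√n` in the exponent. Part (iii) multiplies the bounds of (ii),
using `∑_{n ≤ k} 1/√n ≤ 2√k`.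
-/

open Real Finset
open scoped Nat

lemma prod_Icc_natCast_eq_factorial (n : ℕ) : ∏ i ∈ Icc 1 n, (i : ℝ) = n ! := by
  rw [← Nat.cast_prod, ← Ico_add_one_right_eq_Icc, prod_Ico_id_eq_factorial]

lemma sum_Icc_log_eq_log_factorial (n : ℕ) : ∑ i ∈ Icc 1 n, log i = log n ! := by
  rw [← prod_Icc_natCast_eq_factorial, log_prod]
  intro i hi
  exact Nat.cast_ne_zero.2 (by grind)

lemma one_add_half_log_le_sqrt {x : ℝ} (hx : 0 < x) : 1 + log x / 2 ≤ √x := by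
  rw [← log_sqrt hx.le]
  linarith [log_le_sub_one_of_pos (sqrt_pos.2 hx)]

lemma le_log_factorial (n : ℕ) : n * log n - n ≤ log n ! := by
  rcases eq_or_ne n 0 with rfl | hn
  · simp
  have h2π : 0 ≤ log (2 * π) := log_nonneg (by linarith [pi_gt_three])
  have := Stirling.le_log_factorial_stirling hn
  linarith [log_natCast_nonneg n]

lemma log_factorial_le (n : ℕ) : log n ! ≤ n * log n - n + √n := by
  rcases n with _ | m
  · simp
  have hm : (0 : ℝ) < m + 1 := by positivity
  have h := Stirling.log_stirlingSeq'_antitone (Nat.zero_le m)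
  simp only [Function.comp_apply, Stirling.stirlingSeq_one, Stirling.log_stirlingSeq_formula] at h
  rw [log_div (exp_pos 1).ne' (by positivity), log_exp, log_sqrt zero_le_two,
    log_mul two_ne_zero (by positivity), log_div (by positivity) (exp_pos 1).ne', log_exp] at h
  push_cast at h ⊢
  linarith [one_add_half_log_le_sqrt hm]

lemma sum_Icc_inv_sqrt_le (n : ℕ) : ∑ i ∈ Icc 1 n, 1 / √i ≤ 2 * √n := by
  induction n with
  | zero => simp
  | succ n ih =>
    rw [sum_Icc_succ_top (by omega)]
    have step : 1 / √((n : ℝ) + 1) ≤ 2 * (√((n : ℝ) + 1) - √n) := by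
      have ha : 0 < √((n : ℝ) + 1) := sqrt_pos.2 (by positivity)
      rw [div_le_iff₀ ha]
      nlinarith [sq_sqrt (by positivity : (0 : ℝ) ≤ n + 1), sq_sqrt (Nat.cast_nonneg (α := ℝ) n),
        sq_nonneg (√((n : ℝ) + 1) - √n)]
    push_cast
    linarith

lemma gmean_natCast_rpow (a : ℝ) (k : ℕ) :
    gmean (fun n : ℕ => (n : ℝ) ^ a) k = exp (a * log k ! / k) := by
  rw [gmean, finsetProd_rpow _ _ fun i _ => Nat.cast_nonneg i, prod_Icc_natCast_eq_factorial,
    ← rpow_mul (Nat.cast_nonneg _), rpow_def_of_pos (by positivity)]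
  ring_nf

lemma log_factorial_div_bounds {k : ℕ} (hk : k ≠ 0) :
    log k - 1 ≤ log k ! / k ∧ log k ! / k ≤ log k - 1 + 1 / √k := by
  have hk0 : (0 : ℝ) < k := by positivity
  constructor
  · rw [le_div_iff₀ hk0]
    linarith [le_log_factorial k]
  · rw [div_le_iff₀ hk0, add_mul, one_div_mul_eq_div, div_sqrt]
    linarith [log_factorial_le k]

lemma gmean_rpow_neg_one_div_bounds {p : ℝ} (hp : 0 < p) {k : ℕ} (hk : k ≠ 0) :
    exp ((1 - log k - 1 / √k) / p) ≤ gmean (fun n : ℕ => (n : ℝ) ^ (-1 / p)) k ∧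
      gmean (fun n : ℕ => (n : ℝ) ^ (-1 / p)) k ≤ exp ((1 - log k) / p) := by
  obtain ⟨hlo, hhi⟩ := log_factorial_div_bounds hk
  rw [gmean_natCast_rpow, show -1 / p * log k ! / k = -(log k ! / k) / p by ring]
  constructor <;> gcongr <;> linarith

lemma log_add_one_le_log_add_one_div {x : ℝ} (hx : 0 < x) : log (x + 1) ≤ log x + 1 / x := by
  have h := log_le_sub_one_of_pos (x := (x + 1) / x) (by positivity)
  rw [log_div (by positivity) hx.ne', add_div, div_self hx.ne'] at h
  linarith

lemma dbl_gmean_rpow_neg_one_div_bounds {p : ℝ} (hp : 0 < p) {n : ℕ} (hn : n ≠ 0) :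
    exp ((1 + log 2 - log n - 3 / √n) / p) ≤ dbl (gmean (fun m : ℕ => (m : ℝ) ^ (-1 / p))) n ∧
      dbl (gmean (fun m : ℕ => (m : ℝ) ^ (-1 / p))) n ≤ exp ((1 + log 2 - log n) / p) := by
  set m := (n + 1) / 2
  have hm : m ≠ 0 := by omega
  have hn0 : (0 : ℝ) < n := by positivity
  have hm0 : (0 : ℝ) < m := by positivity
  have hnm : (n : ℝ) ≤ 2 * m := by exact_mod_cast (by omega : n ≤ 2 * m)
  have hmn : 2 * (m : ℝ) ≤ n + 1 := by exact_mod_cast (by omega : 2 * m ≤ n + 1)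
  have hlog : log 2 + log m = log (2 * m) := (log_mul two_ne_zero hm0.ne').symm
  have h_log_le : log n ≤ log 2 + log m := hlog ▸ log_le_log hn0 hnm
  have h_log_ge : log 2 + log m ≤ log n + 1 / √n := by
    have h_sqrt_le : √n ≤ n :=
      sqrt_le_self_iff.2 (Or.inr (by exact_mod_cast Nat.one_le_iff_ne_zero.2 hn))
    calc log 2 + log m = log (2 * m) := hlog
      _ ≤ log (n + 1) := log_le_log (by positivity) hmn
      _ ≤ log n + 1 / n := log_add_one_le_log_add_one_div hn0
      _ ≤ log n + 1 / √n := by gcongr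
  have h_inv_sqrt : 1 / √m ≤ 2 / √n := by
    have : √n ≤ 2 * √m := by
      calc √n ≤ √(2 ^ 2 * m) := sqrt_le_sqrt (by linarith)
        _ = 2 * √m := by rw [sqrt_mul (by positivity), sqrt_sq zero_le_two]
    rw [div_le_div_iff₀ (by positivity) (by positivity)]
    linarith
  have h_three : 3 / √n = 1 / √n + 2 / √n := by ring
  obtain ⟨hlo, hhi⟩ := gmean_rpow_neg_one_div_bounds hp hm
  refine ⟨le_trans ?_ hlo, hhi.trans ?_⟩ <;> gcongr exp (?_ / p) <;> linarith

lemma prod_dbl_gmean_rpow_neg_one_div_bounds {p : ℝ} (hp : 0 < p) (k : ℕ) :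
    exp ((k * (1 + log 2) - log k ! - 6 * √k) / p) ≤
        ∏ n ∈ Icc 1 k, dbl (gmean (fun m : ℕ => (m : ℝ) ^ (-1 / p))) n ∧
      ∏ n ∈ Icc 1 k, dbl (gmean (fun m : ℕ => (m : ℝ) ^ (-1 / p))) n ≤
        exp ((k * (1 + log 2) - log k !) / p) := by
  have hbounds (n : ℕ) (hn : n ∈ Icc 1 k) :=
    dbl_gmean_rpow_neg_one_div_bounds hp (n := n) (by grind)
  have hsum : ∑ n ∈ Icc 1 k, (1 + log 2 - log n) = k * (1 + log 2) - log k ! := by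
    rw [sum_sub_distrib, sum_const, Nat.card_Icc, sum_Icc_log_eq_log_factorial, nsmul_eq_mul,
      Nat.add_sub_cancel]
  have hsum_sqrt : ∑ n ∈ Icc 1 k, (1 + log 2 - log n - 3 / √n) =
      k * (1 + log 2) - log k ! - 3 * ∑ n ∈ Icc 1 k, 1 / √n := by
    rw [sum_sub_distrib, hsum, mul_sum]
    simp only [mul_one_div]
  constructor
  · calc exp ((k * (1 + log 2) - log k ! - 6 * √k) / p)
        ≤ exp (∑ n ∈ Icc 1 k, (1 + log 2 - log n - 3 / √n) / p) := by
          rw [← sum_div, hsum_sqrt]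
          gcongr exp (?_ / p)
          linarith [sum_Icc_inv_sqrt_le k]
      _ = ∏ n ∈ Icc 1 k, exp ((1 + log 2 - log n - 3 / √n) / p) := exp_sum _ _
      _ ≤ _ := prod_le_prod (fun n _ => (exp_pos _).le) (fun n hn => (hbounds n hn).1)
  · calc ∏ n ∈ Icc 1 k, dbl (gmean (fun m : ℕ => (m : ℝ) ^ (-1 / p))) n
        ≤ ∏ n ∈ Icc 1 k, exp ((1 + log 2 - log n) / p) :=
          prod_le_prod (fun n hn => (exp_pos _).le.trans (hbounds n hn).1)
            (fun n hn => (hbounds n hn).2)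
      _ = exp ((k * (1 + log 2) - log k !) / p) := by rw [← exp_sum, ← sum_div, hsum]

lemma rpow_div_rpow_eq_exp_sub {a b : ℝ} (ha : 0 < a) (hb : 0 < b) (s t : ℝ) :
    a ^ s / b ^ t = exp (log a * s - log b * t) := by
  rw [rpow_def_of_pos ha, rpow_def_of_pos hb, exp_sub]

/-- bounds for `w̄`, `ẇ̄` and `∏ ẇ̄` for `w_k = k^{-1/p}`. -/
theorem stmt_15 (p : ℝ) (hp : 0 < p) :
    ∀ k : ℕ, 1 ≤ k →
      (Real.exp (-(1 / (p * Real.sqrt k))) * Real.exp 1 ^ ((1 : ℝ) / p) / (k : ℝ) ^ ((1 : ℝ) / p)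
          ≤ gmean (fun n : ℕ => (n : ℝ) ^ (-(1 : ℝ) / p)) k ∧
        gmean (fun n : ℕ => (n : ℝ) ^ (-(1 : ℝ) / p)) k
          ≤ Real.exp 1 ^ ((1 : ℝ) / p) / (k : ℝ) ^ ((1 : ℝ) / p)) ∧
      (Real.exp (-(3 / (p * Real.sqrt k))) *
            (2 * Real.exp 1) ^ ((1 : ℝ) / p) / (k : ℝ) ^ ((1 : ℝ) / p)
          ≤ dbl (gmean (fun n : ℕ => (n : ℝ) ^ (-(1 : ℝ) / p))) k ∧
        dbl (gmean (fun n : ℕ => (n : ℝ) ^ (-(1 : ℝ) / p))) k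
          ≤ (2 * Real.exp 1) ^ ((1 : ℝ) / p) / (k : ℝ) ^ ((1 : ℝ) / p)) ∧
      (Real.exp (-(6 / p) * Real.sqrt k) *
            (2 * Real.exp 1) ^ ((k : ℝ) / p) / (k.factorial : ℝ) ^ ((1 : ℝ) / p)
          ≤ ∏ n ∈ Finset.Icc 1 k, dbl (gmean (fun m : ℕ => (m : ℝ) ^ (-(1 : ℝ) / p))) n ∧
        (∏ n ∈ Finset.Icc 1 k, dbl (gmean (fun m : ℕ => (m : ℝ) ^ (-(1 : ℝ) / p))) n)
          ≤ (2 * Real.exp 1) ^ ((k : ℝ) / p) / (k.factorial : ℝ) ^ ((1 : ℝ) / p)) := by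
  intro k hk
  have hk' : k ≠ 0 := by omega
  have hk0 : (0 : ℝ) < k := by positivity
  have h2e : log (2 * exp 1) = 1 + log 2 := by
    rw [log_mul two_ne_zero (exp_pos 1).ne', log_exp, add_comm]
  obtain ⟨hi₁, hi₂⟩ := gmean_rpow_neg_one_div_bounds hp hk'
  obtain ⟨hii₁, hii₂⟩ := dbl_gmean_rpow_neg_one_div_bounds hp hk'
  obtain ⟨hiii₁, hiii₂⟩ := prod_dbl_gmean_rpow_neg_one_div_bounds hp k
  simp only [mul_div_assoc, rpow_div_rpow_eq_exp_sub (exp_pos 1) hk0,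
    rpow_div_rpow_eq_exp_sub (by positivity : (0 : ℝ) < 2 * exp 1) hk0,
    rpow_div_rpow_eq_exp_sub (by positivity : (0 : ℝ) < 2 * exp 1) (by positivity : (0 : ℝ) < k !),
    ← exp_add, log_exp, h2e]
  refine ⟨⟨?_, ?_⟩, ⟨?_, ?_⟩, ?_, ?_⟩
  · convert hi₁ using 2; ring
  · convert hi₂ using 2; ring
  · convert hii₁ using 2; ring
  · convert hii₂ using 2; ring
  · convert hiii₁ using 2; ring
  · convert hiii₂ using 2; ring

end
end
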